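/- arXiv:2106.00279 — 9 statements merged into one kernel-verified Lean document; each statement's English description precedes it below -/
import Mathlib

section
/- If v ∈ V is not a member of any violating pair (i.e., there is no u with u ≺_v v or v ≺_v u), then every L0-optimal isotonic regression g of f satisfies g(v) = f(v). -/
open Finset

/-- If `v` belongs to no violating pair, then every `L₀`-optimal isotonic
regression `g` of `f` satisfies `g v = f v`. -/
theorem nonviolator_fixed {V L : Type*} [Fintype V] [PartialOrder V] [LinearOrder L]
    [DecidableEq L] (f g : V → L)
    (v : V)
    (hv : ∀ u : V, ¬ (u < v ∧ f v < f u) ∧ ¬ (v < u ∧ f u < f v))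
    (hg : Monotone g)
    (hopt : ∀ h : V → L, Monotone h →
      (Finset.univ.filter fun w => f w ≠ g w).card ≤
        (Finset.univ.filter fun w => f w ≠ h w).card) :
    g v = f v := by
  classical
  by_contra hne
  have hvg : v ∈ Finset.univ.filter fun w => f w ≠ g w := by
    simp [Ne.symm hne]
  rcases lt_or_gt_of_ne hne with hlt | hgt
  · -- g v < f v : raise g above v
    set h : V → L := fun w => if v ≤ w then max (g w) (f v) else g w with hh
    have hmono : Monotone h := by
      intro a b hab
      simp only [hh]
      by_cases ha : v ≤ a <;> by_cases hb : v ≤ b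
      · rw [if_pos ha, if_pos hb]; exact max_le_max (hg hab) le_rfl
      · exact absurd (ha.trans hab) hb
      · rw [if_neg ha, if_pos hb]; exact le_max_of_le_left (hg hab)
      · rw [if_neg ha, if_neg hb]; exact hg hab
    have hsub : (Finset.univ.filter fun w => f w ≠ h w) ⊆
        (Finset.univ.filter fun w => f w ≠ g w).erase v := by
      intro w hw
      simp only [mem_filter, mem_univ, true_and, hh] at hw
      rcases eq_or_ne w v with rfl | hwv
      · simp [le_of_lt hlt] at hw
      · refine Finset.mem_erase.mpr ⟨hwv, ?_⟩
        simp only [mem_filter, mem_univ, true_and]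
        by_cases hvw : v ≤ w
        · have hvw' : v < w := lt_of_le_of_ne hvw (Ne.symm hwv)
          have hfv : f v ≤ f w := not_lt.mp fun hc => (hv w).2 ⟨hvw', hc⟩
          intro heq
          apply hw
          rw [if_pos hvw, ← heq]
          exact (max_eq_left hfv).symm
        · simpa [hvw] using hw
    have hlt' : (Finset.univ.filter fun w => f w ≠ h w).card <
        (Finset.univ.filter fun w => f w ≠ g w).card :=
      lt_of_le_of_lt (Finset.card_le_card hsub) (Finset.card_erase_lt_of_mem hvg)
    exact absurd (hopt h hmono) (not_le.mpr hlt')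
  · -- f v < g v : lower g below v
    set h : V → L := fun w => if w ≤ v then min (g w) (f v) else g w with hh
    have hmono : Monotone h := by
      intro a b hab
      simp only [hh]
      by_cases ha : a ≤ v <;> by_cases hb : b ≤ v
      · rw [if_pos ha, if_pos hb]; exact min_le_min (hg hab) le_rfl
      · rw [if_pos ha, if_neg hb]; exact min_le_of_left_le (hg hab)
      · exact absurd (hab.trans hb) ha
      · rw [if_neg ha, if_neg hb]; exact hg hab
    have hsub : (Finset.univ.filter fun w => f w ≠ h w) ⊆
        (Finset.univ.filter fun w => f w ≠ g w).erase v := by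
      intro w hw
      simp only [mem_filter, mem_univ, true_and, hh] at hw
      rcases eq_or_ne w v with rfl | hwv
      · simp [le_of_lt hgt] at hw
      · refine Finset.mem_erase.mpr ⟨hwv, ?_⟩
        simp only [mem_filter, mem_univ, true_and]
        by_cases hwv' : w ≤ v
        · have hwv'' : w < v := lt_of_le_of_ne hwv' hwv
          have hfv : f w ≤ f v := not_lt.mp fun hc => (hv w).1 ⟨hwv'', hc⟩
          intro heq
          apply hw
          rw [if_pos hwv', ← heq]
          exact (min_eq_left hfv).symm
        · simpa [hwv'] using hw
    have hlt' : (Finset.univ.filter fun w => f w ≠ h w).card <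
        (Finset.univ.filter fun w => f w ≠ g w).card :=
      lt_of_le_of_lt (Finset.card_le_card hsub) (Finset.card_erase_lt_of_mem hvg)
    exact absurd (hopt h hmono) (not_le.mpr hlt')
end

section
/- The L0 distance of f to monotonicity equals n minus the maximum size of an f-isotonic subset of V; that is, min over isotonic g of ||f−g||_0 = |V| − max{|C| : C ⊆ V, f is isotonic on C}. -/
open Finset

/-- The `L₀` distance of `f` to monotonicity equals `|V|` minus the maximum
size of an `f`-isotonic subset of `V`. -/
theorem L0_distance_eq_card_sub_max_isotonic {V L : Type*} [Fintype V] [PartialOrder V]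
    [DecidableEq V] [LinearOrder L] [Fintype L] [OrderBot L] (f : V → L) :
    sInf {d : ℕ | ∃ g : V → L, Monotone g ∧
        d = (Finset.univ.filter fun v => f v ≠ g v).card} =
      Fintype.card V -
        sSup {k : ℕ | ∃ C : Finset V,
          (∀ u ∈ C, ∀ v ∈ C, u < v → f u ≤ f v) ∧ k = C.card} := by
  classical
  set S := {d : ℕ | ∃ g : V → L, Monotone g ∧
      d = (Finset.univ.filter fun v => f v ≠ g v).card} with hS
  set T := {k : ℕ | ∃ C : Finset V,
      (∀ u ∈ C, ∀ v ∈ C, u < v → f u ≤ f v) ∧ k = C.card} with hT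
  have hSne : S.Nonempty := ⟨_, fun _ => ⊥, monotone_const, rfl⟩
  have hTne : T.Nonempty := ⟨0, ∅, by simp, by simp⟩
  have hTbdd : BddAbove T := by
    refine ⟨Fintype.card V, ?_⟩
    rintro k ⟨C, -, rfl⟩
    simpa using Finset.card_le_card (Finset.subset_univ C)
  -- direction 1 : sInf S ≤ n - sSup T
  have h1 : sInf S ≤ Fintype.card V - sSup T := by
    obtain ⟨C, hC, hk⟩ := Nat.sSup_mem hTne hTbdd
    set g : V → L := fun v => (C.filter (· ≤ v)).sup f with hg
    have hgmono : Monotone g := by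
      intro v w hvw
      apply Finset.sup_mono
      intro u hu
      simp only [Finset.mem_filter] at hu ⊢
      exact ⟨hu.1, hu.2.trans hvw⟩
    have hagree : ∀ v ∈ C, g v = f v := by
      intro v hv
      apply le_antisymm
      · apply Finset.sup_le
        intro u hu
        simp only [Finset.mem_filter] at hu
        rcases eq_or_lt_of_le hu.2 with h | h
        · exact le_of_eq (by rw [h])
        · exact hC u hu.1 v hv h
      · exact Finset.le_sup (by simp [hv])
    have hsub : (Finset.univ.filter fun v => f v ≠ g v) ⊆ Finset.univ \ C := by
      intro v hv
      simp only [Finset.mem_filter, Finset.mem_sdiff, Finset.mem_univ, true_and] at hv ⊢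
      intro hvC
      exact hv ((hagree v hvC).symm)
    have hcard : (Finset.univ.filter fun v => f v ≠ g v).card ≤ Fintype.card V - C.card := by
      calc (Finset.univ.filter fun v => f v ≠ g v).card ≤ (Finset.univ \ C).card :=
            Finset.card_le_card hsub
        _ = Fintype.card V - C.card := by
            rw [Finset.card_sdiff_of_subset (Finset.subset_univ C), Finset.card_univ]
    have hmem : (Finset.univ.filter fun v => f v ≠ g v).card ∈ S := ⟨g, hgmono, rfl⟩
    calc sInf S ≤ _ := Nat.sInf_le hmem
      _ ≤ Fintype.card V - C.card := hcard
      _ = Fintype.card V - sSup T := by rw [← hk]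
  -- direction 2 : n - sSup T ≤ sInf S
  have h2 : Fintype.card V - sSup T ≤ sInf S := by
    obtain ⟨g, hgmono, hd⟩ := Nat.sInf_mem hSne
    set C : Finset V := Finset.univ.filter fun v => f v = g v with hCdef
    have hCiso : ∀ u ∈ C, ∀ v ∈ C, u < v → f u ≤ f v := by
      intro u hu v hv huv
      simp only [hCdef, Finset.mem_filter, Finset.mem_univ, true_and] at hu hv
      rw [hu, hv]
      exact hgmono huv.le
    have hmem : C.card ∈ T := ⟨C, hCiso, rfl⟩
    have hle : C.card ≤ sSup T := le_csSup hTbdd hmem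
    have hcompl : (Finset.univ.filter fun v => f v ≠ g v) = Finset.univ \ C := by
      ext v; simp [hCdef]
    have hdc : sInf S = Fintype.card V - C.card := by
      rw [hd, hcompl, Finset.card_sdiff_of_subset (Finset.subset_univ C), Finset.card_univ]
    rw [hdc]
    exact Nat.sub_le_sub_left hle _
  exact le_antisymm h1 h2
end

section
/- If C is a maximum-size f-isotonic subset of V and v ∉ C, then f(v) does not lie in v's window; i.e., f(v) < w_⪯(v) or f(v) > w_⪰(v). -/
open Finset

/-- If `C` is a maximum-size `f`-isotonic subset and `v ∉ C`, then `f v` lies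
outside `v`'s window: `f v < w_⪯(v)` or `f v > w_⪰(v)` (with the conventions
`w_⪯(v) = −∞`, `w_⪰(v) = +∞` when the corresponding sets are empty, these
conditions are expressed by the existential statements below). -/
theorem not_in_window_of_max_isotonic {V L : Type*} [Fintype V] [PartialOrder V]
    [DecidableEq V] [LinearOrder L] (f : V → L) (C : Finset V)
    (hC : ∀ u ∈ C, ∀ w ∈ C, u < w → f u ≤ f w)
    (hmax : ∀ C' : Finset V, (∀ u ∈ C', ∀ w ∈ C', u < w → f u ≤ f w) →
      C'.card ≤ C.card)
    (v : V) (hv : v ∉ C) :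
    (∃ u ∈ C, u ≤ v ∧ f v < f u) ∨ (∃ u ∈ C, v ≤ u ∧ f u < f v) := by
  by_contra h
  push_neg at h
  obtain ⟨h1, h2⟩ := h
  have hiso : ∀ u ∈ insert v C, ∀ w ∈ insert v C, u < w → f u ≤ f w := by
    intro u hu w hw huw
    rcases Finset.mem_insert.1 hu with hu' | hu <;>
      rcases Finset.mem_insert.1 hw with hw' | hw
    · rw [hu', hw'] at huw; exact absurd huw (lt_irrefl _)
    · rw [hu'] at huw ⊢; exact h2 w hw huw.le
    · rw [hw'] at huw ⊢; exact h1 u hu huw.le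
    · exact hC u hu w hw huw
  have := hmax _ hiso
  rw [Finset.card_insert_of_notMem hv] at this
  omega
end

section
/- Any isotonic function g : V → L that satisfies w_⪯(v) ≤ g(v) ≤ w_⪰(v) for all v ∈ V agrees with f on C, and consequently ||f−g||_0 ≤ |V| − |C|. In particular, if C is a maximum f-isotonic set then g is an L0-optimal isotonic regression of f. -/
open Finset

/-- Any isotonic `g` lying within the windows of an `f`-isotonic set `C`
agrees with `f` on `C`, hence `‖f−g‖₀ ≤ |V| − |C|`; if moreover `C` has
maximum size then `g` is an `L₀`-optimal isotonic regression of `f`. -/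
theorem window_function_is_L0_optimal {V L : Type*} [Fintype V] [PartialOrder V]
    [DecidableEq V] [LinearOrder L] (f g : V → L) (C : Finset V)
    (hC : ∀ u ∈ C, ∀ w ∈ C, u < w → f u ≤ f w)
    (hg : Monotone g)
    (hwin : ∀ v : V, ∀ u ∈ C, (u ≤ v → f u ≤ g v) ∧ (v ≤ u → g v ≤ f u)) :
    (∀ v ∈ C, g v = f v) ∧
    (Finset.univ.filter fun v => f v ≠ g v).card ≤ Fintype.card V - C.card ∧
    ((∀ C' : Finset V, (∀ u ∈ C', ∀ w ∈ C', u < w → f u ≤ f w) →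
        C'.card ≤ C.card) →
      ∀ h : V → L, Monotone h →
        (Finset.univ.filter fun v => f v ≠ g v).card ≤
          (Finset.univ.filter fun v => f v ≠ h v).card) := by
  classical
  have hagree : ∀ v ∈ C, g v = f v := by
    intro v hv
    have h1 := (hwin v v hv).1 le_rfl
    have h2 := (hwin v v hv).2 le_rfl
    exact le_antisymm h2 h1
  have hsub : (Finset.univ.filter fun v => f v ≠ g v) ⊆ Finset.univ \ C := by
    intro v hv
    simp only [mem_filter, mem_univ, true_and] at hv
    simp only [mem_sdiff, mem_univ, true_and]
    intro hvC
    exact hv (hagree v hvC).symm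
  have hcard : (Finset.univ.filter fun v => f v ≠ g v).card ≤ Fintype.card V - C.card := by
    calc (Finset.univ.filter fun v => f v ≠ g v).card ≤ (Finset.univ \ C).card :=
          card_le_card hsub
      _ = Fintype.card V - C.card := by
          rw [card_sdiff_of_subset (subset_univ C), Finset.card_univ]
  refine ⟨hagree, hcard, ?_⟩
  intro hmax h hmono
  set A := Finset.univ.filter fun v => f v = h v with hA
  have hAiso : ∀ u ∈ A, ∀ w ∈ A, u < w → f u ≤ f w := by
    intro u hu w hw huw
    simp only [hA, mem_filter, mem_univ, true_and] at hu hw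
    rw [hu, hw]
    exact hmono huw.le
  have hAcard : A.card ≤ C.card := hmax A hAiso
  have hcompl : (Finset.univ.filter fun v => f v ≠ h v) = Finset.univ \ A := by
    ext v
    simp [hA]
  have : Fintype.card V - C.card ≤ (Finset.univ.filter fun v => f v ≠ h v).card := by
    rw [hcompl, card_sdiff_of_subset (subset_univ A), Finset.card_univ]
    exact Nat.sub_le_sub_left hAcard _
  exact le_trans hcard this
end

section
/- Trim-then-optimize is correct for L1: given an f-isotonic set C with windows [w_⪯(v), w_⪰(v)], define the trimmed function f̃ by clamping f(v) into [w_⪯(v), w_⪰(v)]. Then for every isotonic g with w_⪯(v) ≤ g(v) ≤ w_⪰(v) for all v, Σ_v |f(v)−g(v)| = Σ_v |f(v)−f̃(v)| + Σ_v |f̃(v)−g(v)|. Hence g minimizes the L1 distance to f among isotonic functions agreeing with f on C iff g minimizes the L1 distance to f̃ among such functions. -/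
open Finset

variable {V : Type*}

/-- The trim of `f` at `v` with respect to the `f`-isotonic set `C`:
`f v` clamped into the window `[w_⪯ v, w_⪰ v]`, i.e.
`min(w_⪰ v, max(w_⪯ v, f v))` with the conventions `w_⪯ v = −∞`
(resp. `w_⪰ v = +∞`) when the corresponding set is empty. -/
noncomputable def trimFn [Fintype V] [PartialOrder V]
    [DecidableRel ((· ≤ ·) : V → V → Prop)] (f : V → ℝ) (C : Finset V) (v : V) : ℝ :=
  (insert ((insert (f v) ((C.filter fun u => u ≤ v).image f)).max' (by simp))
      ((C.filter fun u => v ≤ u).image f)).min' (by simp)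

lemma abs_split_of_between {a b t : ℝ} (h1 : min a b ≤ t) (h2 : t ≤ max a b) :
    |a - b| = |a - t| + |t - b| := by
  rcases le_total a b with h | h
  · rw [min_eq_left h] at h1; rw [max_eq_right h] at h2
    rw [abs_of_nonpos (by linarith), abs_of_nonpos (by linarith),
      abs_of_nonpos (by linarith)]; ring
  · rw [min_eq_right h] at h1; rw [max_eq_left h] at h2
    rw [abs_of_nonneg (by linarith), abs_of_nonneg (by linarith),
      abs_of_nonneg (by linarith)]; ring

lemma trim_between [Fintype V] [PartialOrder V]
    [DecidableRel ((· ≤ ·) : V → V → Prop)] (f : V → ℝ) (C : Finset V)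
    (g : V → ℝ) (v : V)
    (hg : ∀ u ∈ C, (u ≤ v → f u ≤ g v) ∧ (v ≤ u → g v ≤ f u)) :
    min (f v) (g v) ≤ trimFn f C v ∧ trimFn f C v ≤ max (f v) (g v) := by
  set Low := (C.filter fun u => u ≤ v).image f with hLow
  set Upp := (C.filter fun u => v ≤ u).image f with hUpp
  set M := (insert (f v) Low).max' (by simp) with hMdef
  have hMf : f v ≤ M := Finset.le_max' _ _ (Finset.mem_insert_self _ _)
  have hM : M ∈ insert (f v) Low := Finset.max'_mem _ _
  have htM : trimFn f C v ≤ M := Finset.min'_le _ _ (Finset.mem_insert_self _ _)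
  have ht : trimFn f C v ∈ insert M Upp := Finset.min'_mem _ _
  have hMg : M = f v ∨ M ≤ g v := by
    rcases Finset.mem_insert.1 hM with h | h
    · exact Or.inl h
    · right
      rcases Finset.mem_image.1 h with ⟨u, hu, heq⟩
      rcases Finset.mem_filter.1 hu with ⟨huC, huv⟩
      exact heq ▸ (hg u huC).1 huv
  constructor
  · rcases Finset.mem_insert.1 ht with h | h
    · calc min (f v) (g v) ≤ f v := min_le_left _ _
        _ ≤ M := hMf
        _ = trimFn f C v := h.symm
    · rcases Finset.mem_image.1 h with ⟨u, hu, heq⟩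
      rcases Finset.mem_filter.1 hu with ⟨huC, huv⟩
      calc min (f v) (g v) ≤ g v := min_le_right _ _
        _ ≤ f u := (hg u huC).2 huv
        _ = trimFn f C v := heq
  · rcases hMg with h | h
    · calc trimFn f C v ≤ M := htM
        _ = f v := h
        _ ≤ max (f v) (g v) := le_max_left _ _
    · calc trimFn f C v ≤ M := htM
        _ ≤ g v := h
        _ ≤ max (f v) (g v) := le_max_right _ _

/-- Trim-then-optimize is correct for `L₁`: for every isotonic `g` within the
windows of `C`, `Σ|f−g| = Σ|f−f̃| + Σ|f̃−g|` where `f̃` is the trim of `f`;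
hence `g` minimizes the `L₁` distance to `f` among isotonic functions agreeing
with `f` on `C` iff it minimizes the `L₁` distance to the trimmed function `f̃`
among such functions. -/
theorem L1_trim_then_optimize [Fintype V] [PartialOrder V]
    [DecidableRel ((· ≤ ·) : V → V → Prop)] (f : V → ℝ) (C : Finset V)
    (hC : ∀ u ∈ C, ∀ w ∈ C, u < w → f u ≤ f w) :
    (∀ g : V → ℝ, Monotone g →
      (∀ v : V, ∀ u ∈ C, (u ≤ v → f u ≤ g v) ∧ (v ≤ u → g v ≤ f u)) →
      ∑ v : V, |f v - g v| =
        (∑ v : V, |f v - trimFn f C v|) + ∑ v : V, |trimFn f C v - g v|) ∧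
    (∀ g : V → ℝ, Monotone g → (∀ v ∈ C, g v = f v) →
      ((∀ h : V → ℝ, Monotone h → (∀ v ∈ C, h v = f v) →
          ∑ v : V, |f v - g v| ≤ ∑ v : V, |f v - h v|) ↔
       (∀ h : V → ℝ, Monotone h → (∀ v ∈ C, h v = f v) →
          ∑ v : V, |trimFn f C v - g v| ≤ ∑ v : V, |trimFn f C v - h v|))) := by
  have key : ∀ g : V → ℝ,
      (∀ v : V, ∀ u ∈ C, (u ≤ v → f u ≤ g v) ∧ (v ≤ u → g v ≤ f u)) →
      ∑ v : V, |f v - g v| =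
        (∑ v : V, |f v - trimFn f C v|) + ∑ v : V, |trimFn f C v - g v| := by
    intro g hg
    rw [← Finset.sum_add_distrib]
    refine Finset.sum_congr rfl fun v _ => ?_
    obtain ⟨h1, h2⟩ := trim_between f C g v (hg v)
    exact abs_split_of_between h1 h2
  have window : ∀ g : V → ℝ, Monotone g → (∀ v ∈ C, g v = f v) →
      ∀ v : V, ∀ u ∈ C, (u ≤ v → f u ≤ g v) ∧ (v ≤ u → g v ≤ f u) := by
    intro g hmono hagree v u huC
    constructor
    · intro huv; rw [← hagree u huC]; exact hmono huv
    · intro hvu; rw [← hagree u huC]; exact hmono hvu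
  refine ⟨fun g _ hg => key g hg, fun g hgm hga => ?_⟩
  have hg := key g (window g hgm hga)
  constructor
  · intro H h hhm hha
    have hh := key h (window h hhm hha)
    have := H h hhm hha
    linarith
  · intro H h hhm hha
    have hh := key h (window h hhm hha)
    have := H h hhm hha
    linarith
end

section
/- Let g be any isotonic function on V and g′ its trim to the windows of an f-isotonic set C (i.e., g′(v) is g(v) clamped into [w_⪯(v), w_⪰(v)]). Then g′ is isotonic, agrees with f on C, and ||f−g′||_∞ ≤ max{||f−g||_∞, trim-err(f, C)}. -/
open Finset

variable {V : Type*}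

/-- `g v` clamped into the window `[w_⪯ v, w_⪰ v]` of the set `C`, with the
conventions `w_⪯ v = −∞` and `w_⪰ v = +∞` when the corresponding sets are empty. -/
noncomputable def trimTo [Fintype V] [PartialOrder V]
    [DecidableRel ((· ≤ ·) : V → V → Prop)] (f : V → ℝ) (C : Finset V)
    (g : V → ℝ) (v : V) : ℝ :=
  (insert ((insert (g v) ((C.filter fun u => u ≤ v).image f)).max' (by simp))
      ((C.filter fun u => v ≤ u).image f)).min' (by simp)

/-- `trim-err(f, v)`: the larger of the maximal excess `f w − f v` over
predecessors `w ⪯ v` with `f w ≥ f v`, and the maximal excess `f v − f w` over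
successors `w ⪰ v` with `f w ≤ f v` (and `0` if both sets are empty). -/
noncomputable def trimErr [Fintype V] [PartialOrder V]
    [DecidableRel ((· ≤ ·) : V → V → Prop)] (f : V → ℝ) (v : V) : ℝ :=
  (insert (0 : ℝ)
    (((Finset.univ.filter fun w => w ≤ v ∧ f v ≤ f w).image fun w => f w - f v) ∪
     ((Finset.univ.filter fun w => v ≤ w ∧ f w ≤ f v).image fun w => f v - f w))).max'
    (by simp)

/-- `trim-err(f, C) = max_{v ∈ C} trim-err(f, v)` (with `0` for empty `C`;
note each `trim-err(f, v) ≥ 0`). -/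
noncomputable def trimErrSet [Fintype V] [PartialOrder V]
    [DecidableRel ((· ≤ ·) : V → V → Prop)] (f : V → ℝ) (C : Finset V) : ℝ :=
  (insert (0 : ℝ) (C.image (trimErr f))).max' (by simp)

section Aux
set_option linter.unusedSectionVars false
variable [Fintype V] [PartialOrder V] [DecidableRel ((· ≤ ·) : V → V → Prop)]

lemma trimErr_le₁ (f : V → ℝ) {w v : V} (h1 : w ≤ v) (h2 : f v ≤ f w) :
    f w - f v ≤ trimErr f v := by
  unfold trimErr
  apply Finset.le_max'
  apply Finset.mem_insert_of_mem
  apply Finset.mem_union_left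
  exact Finset.mem_image.2 ⟨w, by simp [h1, h2], rfl⟩

lemma trimErr_le₂ (f : V → ℝ) {w v : V} (h1 : v ≤ w) (h2 : f w ≤ f v) :
    f v - f w ≤ trimErr f v := by
  unfold trimErr
  apply Finset.le_max'
  apply Finset.mem_insert_of_mem
  apply Finset.mem_union_right
  exact Finset.mem_image.2 ⟨w, by simp [h1, h2], rfl⟩

lemma trimErr_le_set (f : V → ℝ) {C : Finset V} {v : V} (hv : v ∈ C) :
    trimErr f v ≤ trimErrSet f C := by
  unfold trimErrSet
  exact Finset.le_max' _ _ (Finset.mem_insert_of_mem (Finset.mem_image_of_mem _ hv))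

/-- Lower window combined with `g v`. -/
noncomputable def mxA (f : V → ℝ) (C : Finset V) (g : V → ℝ) (v : V) : ℝ :=
  (insert (g v) ((C.filter fun u => u ≤ v).image f)).max' (by simp)

variable (f : V → ℝ) (C : Finset V) (g : V → ℝ)

lemma g_le_mxA (v : V) : g v ≤ mxA f C g v := by
  unfold mxA
  exact Finset.le_max' _ _ (Finset.mem_insert_self _ _)

lemma f_le_mxA {u v : V} (hu : u ∈ C) (huv : u ≤ v) : f u ≤ mxA f C g v := by
  unfold mxA
  apply Finset.le_max'
  apply Finset.mem_insert_of_mem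
  apply Finset.mem_image_of_mem
  exact Finset.mem_filter.2 ⟨hu, huv⟩

lemma mxA_cases (v : V) : mxA f C g v = g v ∨ ∃ u ∈ C, u ≤ v ∧ mxA f C g v = f u := by
  have : mxA f C g v ∈ insert (g v) ((C.filter fun u => u ≤ v).image f) :=
    Finset.max'_mem _ _
  rcases Finset.mem_insert.1 this with h | h
  · exact Or.inl h
  · rcases Finset.mem_image.1 h with ⟨u, hu, hfu⟩
    rcases Finset.mem_filter.1 hu with ⟨huC, huv⟩
    exact Or.inr ⟨u, huC, huv, hfu.symm⟩

lemma mxA_le {v : V} {x : ℝ} (hg : g v ≤ x)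
    (hf : ∀ u ∈ C, u ≤ v → f u ≤ x) : mxA f C g v ≤ x := by
  unfold mxA
  apply Finset.max'_le
  intro y hy
  rcases Finset.mem_insert.1 hy with h | h
  · exact h ▸ hg
  · rcases Finset.mem_image.1 h with ⟨u, hu, hfu⟩
    rcases Finset.mem_filter.1 hu with ⟨huC, huv⟩
    exact hfu ▸ hf u huC huv

lemma trimTo_le_mxA (v : V) : trimTo f C g v ≤ mxA f C g v := by
  unfold trimTo
  exact Finset.min'_le _ _ (Finset.mem_insert_self _ _)

lemma trimTo_le_f {u v : V} (hu : u ∈ C) (hvu : v ≤ u) : trimTo f C g v ≤ f u := by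
  unfold trimTo
  apply Finset.min'_le
  apply Finset.mem_insert_of_mem
  apply Finset.mem_image_of_mem
  exact Finset.mem_filter.2 ⟨hu, hvu⟩

lemma trimTo_cases (v : V) : trimTo f C g v = mxA f C g v ∨
    ∃ u ∈ C, v ≤ u ∧ trimTo f C g v = f u := by
  have : trimTo f C g v ∈
      insert (mxA f C g v) ((C.filter fun u => v ≤ u).image f) :=
    Finset.min'_mem _ _
  rcases Finset.mem_insert.1 this with h | h
  · exact Or.inl h
  · rcases Finset.mem_image.1 h with ⟨u, hu, hfu⟩
    rcases Finset.mem_filter.1 hu with ⟨huC, hvu⟩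
    exact Or.inr ⟨u, huC, hvu, hfu.symm⟩

lemma le_trimTo {v : V} {x : ℝ} (hA : x ≤ mxA f C g v)
    (hf : ∀ u ∈ C, v ≤ u → x ≤ f u) : x ≤ trimTo f C g v := by
  unfold trimTo
  apply Finset.le_min'
  intro y hy
  rcases Finset.mem_insert.1 hy with h | h
  · exact h ▸ hA
  · rcases Finset.mem_image.1 h with ⟨u, hu, hfu⟩
    rcases Finset.mem_filter.1 hu with ⟨huC, hvu⟩
    exact hfu ▸ hf u huC hvu

end Aux

/-- Trimming an isotonic `g` to the windows of an `f`-isotonic set `C` yields an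
isotonic function agreeing with `f` on `C` whose `L∞` error is at most
`max(‖f−g‖_∞, trim-err(f, C))`. -/
theorem Linf_trim_bound [Fintype V] [Nonempty V] [PartialOrder V]
    [DecidableRel ((· ≤ ·) : V → V → Prop)] (f : V → ℝ) (C : Finset V)
    (hC : ∀ u ∈ C, ∀ w ∈ C, u < w → f u ≤ f w)
    (g : V → ℝ) (hg : Monotone g) :
    Monotone (trimTo f C g) ∧
    (∀ v ∈ C, trimTo f C g v = f v) ∧
    (Finset.univ.sup' Finset.univ_nonempty fun v => |f v - trimTo f C g v|) ≤
      max (Finset.univ.sup' Finset.univ_nonempty fun v => |f v - g v|)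
        (trimErrSet f C) := by
  classical
  have hmono : Monotone (trimTo f C g) := by
    intro v v' hvv'
    have hmxAmono : mxA f C g v ≤ mxA f C g v' :=
      mxA_le f C g (le_trans (hg hvv') (g_le_mxA f C g v'))
        (fun u hu huv => f_le_mxA f C g hu (le_trans huv hvv'))
    rcases trimTo_cases f C g v' with h | ⟨u, huC, hvu, h⟩
    · rw [h]; exact le_trans (trimTo_le_mxA f C g v) hmxAmono
    · rw [h]; exact trimTo_le_f f C g huC (le_trans hvv' hvu)
  have hagree : ∀ v ∈ C, trimTo f C g v = f v := by
    intro v hv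
    apply le_antisymm (trimTo_le_f f C g hv le_rfl)
    apply le_trimTo f C g (f_le_mxA f C g hv le_rfl)
    intro u huC hvu
    rcases eq_or_lt_of_le hvu with heq | hlt
    · rw [heq]
    · exact hC v hv u huC hlt
  refine ⟨hmono, hagree, ?_⟩
  set M := Finset.univ.sup' Finset.univ_nonempty fun v => |f v - g v| with hMdef
  have hMge : ∀ v, |f v - g v| ≤ M := fun v =>
    Finset.le_sup' (fun v => |f v - g v|) (Finset.mem_univ v)
  have hMnn : (0 : ℝ) ≤ M :=
    le_trans (abs_nonneg _) (hMge (Classical.arbitrary V))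
  apply Finset.sup'_le
  intro v _
  rw [abs_sub_le_iff]
  constructor
  · -- f v - trimTo v ≤ max M E
    rcases trimTo_cases f C g v with h | ⟨u, huC, hvu, h⟩
    · rw [h]
      calc f v - mxA f C g v ≤ f v - g v := by linarith [g_le_mxA f C g v]
        _ ≤ |f v - g v| := le_abs_self _
        _ ≤ M := hMge v
        _ ≤ max M (trimErrSet f C) := le_max_left _ _
    · rw [h]
      by_cases hle : f v ≤ f u
      · calc f v - f u ≤ 0 := by linarith
          _ ≤ M := hMnn
          _ ≤ max M (trimErrSet f C) := le_max_left _ _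
      · push_neg at hle
        calc f v - f u ≤ trimErr f u := trimErr_le₁ f hvu hle.le
          _ ≤ trimErrSet f C := trimErr_le_set f huC
          _ ≤ max M (trimErrSet f C) := le_max_right _ _
  · -- trimTo v - f v ≤ max M E
    have ht := trimTo_le_mxA f C g v
    rcases mxA_cases f C g v with h | ⟨u, huC, huv, h⟩
    · calc trimTo f C g v - f v ≤ g v - f v := by rw [h] at ht; linarith
        _ ≤ |f v - g v| := by rw [abs_sub_comm]; exact le_abs_self _
        _ ≤ M := hMge v
        _ ≤ max M (trimErrSet f C) := le_max_left _ _
    · rw [h] at ht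
      by_cases hle : f u ≤ f v
      · calc trimTo f C g v - f v ≤ 0 := by linarith
          _ ≤ M := hMnn
          _ ≤ max M (trimErrSet f C) := le_max_left _ _
      · push_neg at hle
        calc trimTo f C g v - f v ≤ f u - f v := by linarith
          _ ≤ trimErr f u := trimErr_le₂ f huv hle.le
          _ ≤ trimErrSet f C := trimErr_le_set f huC
          _ ≤ max M (trimErrSet f C) := le_max_right _ _
end

section
/- If g is an L∞-optimal isotonic regression of f and g′ is g trimmed to the windows of an f-isotonic set C, then ||f−g′||_∞ = max{||f−g||_∞, trim-err(f, C)}; i.e., g′ minimizes the L∞ error among isotonic functions agreeing with f on C. -/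
open Finset

variable {V : Type*}

section Helpers
variable [Fintype V] [PartialOrder V] [DecidableRel ((· ≤ ·) : V → V → Prop)]

lemma succ_term_le (f : V → ℝ) {u v : V} (huv : u ≤ v) (h : f v ≤ f u) :
    f u - f v ≤ trimErr f u := by
  apply Finset.le_max'
  simp only [Finset.mem_insert, Finset.mem_union, Finset.mem_image, Finset.mem_filter,
    Finset.mem_univ, true_and]
  exact Or.inr (Or.inr ⟨v, ⟨huv, h⟩, rfl⟩)

lemma pred_term_le (f : V → ℝ) {v s : V} (hvs : v ≤ s) (h : f s ≤ f v) :
    f v - f s ≤ trimErr f s := by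
  apply Finset.le_max'
  simp only [Finset.mem_insert, Finset.mem_union, Finset.mem_image, Finset.mem_filter,
    Finset.mem_univ, true_and]
  exact Or.inr (Or.inl ⟨v, ⟨hvs, h⟩, rfl⟩)

lemma trimErrSet_nonneg (f : V → ℝ) (C : Finset V) : 0 ≤ trimErrSet f C :=
  Finset.le_max' _ _ (by simp)

lemma trimTo_eq (f : V → ℝ) {C : Finset V}
    (hC : ∀ u ∈ C, ∀ w ∈ C, u < w → f u ≤ f w) (g : V → ℝ) {v : V} (hv : v ∈ C) :
    trimTo f C g v = f v := by
  unfold trimTo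
  apply le_antisymm
  · apply Finset.min'_le
    apply Finset.mem_insert.mpr
    exact Or.inr (Finset.mem_image.mpr ⟨v, Finset.mem_filter.mpr ⟨hv, le_refl v⟩, rfl⟩)
  · apply Finset.le_min'
    intro y hy
    rcases Finset.mem_insert.mp hy with rfl | hy
    · refine le_trans ?_ (Finset.le_max' _ (f v) ?_)
      · exact le_refl _
      · exact Finset.mem_insert.mpr (Or.inr (Finset.mem_image.mpr
          ⟨v, Finset.mem_filter.mpr ⟨hv, le_refl v⟩, rfl⟩))
    · obtain ⟨s, hs, rfl⟩ := Finset.mem_image.mp hy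
      obtain ⟨hsC, hvs⟩ := Finset.mem_filter.mp hs
      rcases eq_or_lt_of_le hvs with rfl | hlt
      · exact le_refl _
      · exact hC v hv s hsC hlt

lemma trimTo_mono (f : V → ℝ) (C : Finset V) {g : V → ℝ} (hg : Monotone g) :
    Monotone (trimTo f C g) := by
  intro u v huv
  unfold trimTo
  apply Finset.le_min'
  intro y hy
  rcases Finset.mem_insert.mp hy with rfl | hy
  · refine le_trans (Finset.min'_le _ _ (Finset.mem_insert_self _ _)) ?_
    apply Finset.max'_le
    intro x hx
    rcases Finset.mem_insert.mp hx with rfl | hx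
    · refine le_trans (hg huv) (Finset.le_max' _ _ ?_)
      exact Finset.mem_insert_self _ _
    · obtain ⟨w, hw, rfl⟩ := Finset.mem_image.mp hx
      obtain ⟨hwC, hwu⟩ := Finset.mem_filter.mp hw
      refine Finset.le_max' _ _ ?_
      refine Finset.mem_insert.mpr (Or.inr (Finset.mem_image.mpr ⟨w, ?_, rfl⟩))
      exact Finset.mem_filter.mpr ⟨hwC, le_trans hwu huv⟩
  · obtain ⟨s, hs, rfl⟩ := Finset.mem_image.mp hy
    obtain ⟨hsC, hvs⟩ := Finset.mem_filter.mp hs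
    refine Finset.min'_le _ _ ?_
    refine Finset.mem_insert.mpr (Or.inr (Finset.mem_image.mpr ⟨s, ?_, rfl⟩))
    exact Finset.mem_filter.mpr ⟨hsC, le_trans huv hvs⟩

lemma trimTo_err_bound (f : V → ℝ) (C : Finset V) (g : V → ℝ) (v : V) :
    |f v - trimTo f C g v| ≤ max (|f v - g v|) (trimErrSet f C) := by
  rw [abs_sub_le_iff]
  constructor
  · -- f v - g' v ≤ max
    have hmem : trimTo f C g v ∈ _ := Finset.min'_mem _ (show (insert ((insert (g v)
        ((C.filter fun u => u ≤ v).image f)).max' (by simp))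
        ((C.filter fun u => v ≤ u).image f)).Nonempty by simp)
    rcases Finset.mem_insert.mp hmem with hm | hm
    · have hgv : g v ≤ trimTo f C g v := by
        rw [hm]; exact Finset.le_max' _ _ (Finset.mem_insert_self _ _)
      have : f v - trimTo f C g v ≤ f v - g v := by linarith
      exact le_max_of_le_left (le_trans this (le_abs_self _))
    · obtain ⟨s, hs, hfs⟩ := Finset.mem_image.mp hm
      obtain ⟨hsC, hvs⟩ := Finset.mem_filter.mp hs
      rcases le_total (f s) (f v) with hle | hle
      · have h1 : f v - f s ≤ trimErr f s := pred_term_le f hvs hle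
        rw [← hfs]
        exact le_max_of_le_right (le_trans h1 (trimErr_le_set f hsC))
      · rw [← hfs]
        exact le_max_of_le_right (le_trans (by linarith) (trimErrSet_nonneg f C))
  · -- g' v - f v ≤ max
    have hle : trimTo f C g v ≤ (insert (g v) ((C.filter fun u => u ≤ v).image f)).max'
        (by simp) := Finset.min'_le _ _ (Finset.mem_insert_self _ _)
    have hmem := Finset.max'_mem (insert (g v) ((C.filter fun u => u ≤ v).image f)) (by simp)
    rcases Finset.mem_insert.mp hmem with hm | hm
    · rw [hm] at hle
      have : trimTo f C g v - f v ≤ g v - f v := by linarith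
      exact le_max_of_le_left (le_trans this (by rw [abs_sub_comm]; exact le_abs_self _))
    · obtain ⟨u, hu, hfu⟩ := Finset.mem_image.mp hm
      obtain ⟨huC, huv⟩ := Finset.mem_filter.mp hu
      rw [← hfu] at hle
      rcases le_total (f v) (f u) with h1 | h1
      · have h2 : f u - f v ≤ trimErr f u := succ_term_le f huv h1
        exact le_max_of_le_right (le_trans (by linarith) (trimErr_le_set f huC))
      · exact le_max_of_le_right (le_trans (by linarith) (trimErrSet_nonneg f C))

lemma trimErrSet_lower [Nonempty V] (f : V → ℝ) (C : Finset V) (h : V → ℝ)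
    (hh : Monotone h) (hagr : ∀ v ∈ C, h v = f v) :
    trimErrSet f C ≤ Finset.univ.sup' Finset.univ_nonempty fun v => |f v - h v| := by
  have h0 : (0 : ℝ) ≤ Finset.univ.sup' Finset.univ_nonempty fun v => |f v - h v| := by
    refine le_trans (abs_nonneg (f (Classical.arbitrary V) - h (Classical.arbitrary V))) ?_
    exact Finset.le_sup' (fun v => |f v - h v|) (Finset.mem_univ _)
  apply Finset.max'_le
  intro y hy
  rcases Finset.mem_insert.mp hy with rfl | hy
  · exact h0
  · obtain ⟨v, hv, rfl⟩ := Finset.mem_image.mp hy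
    apply Finset.max'_le
    intro z hz
    rcases Finset.mem_insert.mp hz with rfl | hz
    · exact h0
    · have hv' := hagr v hv
      rcases Finset.mem_union.mp hz with hz | hz
      · obtain ⟨w, hw, rfl⟩ := Finset.mem_image.mp hz
        have hp := (Finset.mem_filter.mp hw).2
        have hwv' : h w ≤ h v := hh hp.1
        calc f w - f v ≤ f w - h w := by linarith [hp.2]
          _ ≤ |f w - h w| := le_abs_self _
          _ ≤ _ := Finset.le_sup' (fun v => |f v - h v|) (Finset.mem_univ w)
      · obtain ⟨w, hw, rfl⟩ := Finset.mem_image.mp hz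
        have hp := (Finset.mem_filter.mp hw).2
        have hwv' : h v ≤ h w := hh hp.1
        calc f v - f w ≤ h w - f w := by linarith [hp.2]
          _ ≤ |f w - h w| := by rw [abs_sub_comm]; exact le_abs_self _
          _ ≤ _ := Finset.le_sup' (fun v => |f v - h v|) (Finset.mem_univ w)

end Helpers

/-- If `g` is an `L∞`-optimal isotonic regression of `f` and `g′` is `g` trimmed
to the windows of an `f`-isotonic set `C`, then
`‖f−g′‖_∞ = max(‖f−g‖_∞, trim-err(f, C))`, and `g′` minimizes the `L∞` error
among isotonic functions agreeing with `f` on `C`. -/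
theorem Linf_trim_optimal [Fintype V] [Nonempty V] [PartialOrder V]
    [DecidableRel ((· ≤ ·) : V → V → Prop)] (f : V → ℝ) (C : Finset V)
    (hC : ∀ u ∈ C, ∀ w ∈ C, u < w → f u ≤ f w)
    (g : V → ℝ) (hg : Monotone g)
    (hopt : ∀ h : V → ℝ, Monotone h →
      (Finset.univ.sup' Finset.univ_nonempty fun v => |f v - g v|) ≤
        Finset.univ.sup' Finset.univ_nonempty fun v => |f v - h v|) :
    (Finset.univ.sup' Finset.univ_nonempty fun v => |f v - trimTo f C g v|) =
      max (Finset.univ.sup' Finset.univ_nonempty fun v => |f v - g v|)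
        (trimErrSet f C) ∧
    (∀ h : V → ℝ, Monotone h → (∀ v ∈ C, h v = f v) →
      (Finset.univ.sup' Finset.univ_nonempty fun v => |f v - trimTo f C g v|) ≤
        Finset.univ.sup' Finset.univ_nonempty fun v => |f v - h v|) := by
  
  have hmono := trimTo_mono f C hg
  have hagree : ∀ v ∈ C, trimTo f C g v = f v := fun v hv => trimTo_eq f hC g hv
  have upper : (Finset.univ.sup' Finset.univ_nonempty fun v => |f v - trimTo f C g v|) ≤
      max (Finset.univ.sup' Finset.univ_nonempty fun v => |f v - g v|) (trimErrSet f C) := by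
    apply Finset.sup'_le
    intro v _
    refine le_trans (trimTo_err_bound f C g v) (max_le_max ?_ le_rfl)
    exact Finset.le_sup' (fun v => |f v - g v|) (Finset.mem_univ v)
  have lowg : (Finset.univ.sup' Finset.univ_nonempty fun v => |f v - g v|) ≤
      Finset.univ.sup' Finset.univ_nonempty fun v => |f v - trimTo f C g v| :=
    hopt _ hmono
  have lowT : trimErrSet f C ≤
      Finset.univ.sup' Finset.univ_nonempty fun v => |f v - trimTo f C g v| :=
    trimErrSet_lower f C _ hmono hagree
  have heq := le_antisymm upper (max_le lowg lowT)
  refine ⟨heq, ?_⟩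
  intro h hh hag
  rw [heq]
  exact max_le (hopt h hh) (trimErrSet_lower f C h hh hag)
end

section
/- For any v ∈ V and any isotonic function h agreeing with f on a set C containing v, ||f−h||_∞ ≥ trim-err(f, v); i.e., the trim error of each fixed point is a lower bound on the L∞ error of any isotonic regression that preserves f's value at that point. -/
open Finset

variable {V : Type*}

/-- The trim error of any fixed point `v ∈ C` is a lower bound on the `L∞` error
of every isotonic regression that agrees with `f` on `C`. -/
theorem trimErr_le_Linf [Fintype V] [Nonempty V] [PartialOrder V]
    [DecidableRel ((· ≤ ·) : V → V → Prop)] (f : V → ℝ) (C : Set V)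
    (v : V) (hv : v ∈ C)
    (h : V → ℝ) (hh : Monotone h) (hagree : ∀ u ∈ C, h u = f u) :
    trimErr f v ≤ Finset.univ.sup' Finset.univ_nonempty fun w => |f w - h w| := by
  have hv' : h v = f v := hagree v hv
  apply Finset.max'_le
  intro y hy
  simp only [Finset.mem_insert, Finset.mem_union, Finset.mem_image,
    Finset.mem_filter, Finset.mem_univ, true_and] at hy
  rcases hy with rfl | ⟨w, ⟨hwv, hfw⟩, rfl⟩ | ⟨w, ⟨hwv, hfw⟩, rfl⟩
  · exact le_trans (abs_nonneg (f v - h v)) (Finset.le_sup' (fun w => |f w - h w|) (Finset.mem_univ v))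
  · refine le_trans ?_ (Finset.le_sup' _ (Finset.mem_univ w))
    have := hh hwv
    rw [hv'] at this
    calc f w - f v ≤ f w - h w := by linarith
    _ ≤ |f w - h w| := le_abs_self _
  · refine le_trans ?_ (Finset.le_sup' _ (Finset.mem_univ w))
    have := hh hwv
    rw [hv'] at this
    calc f v - f w ≤ h w - f w := by linarith
    _ ≤ |f w - h w| := by rw [abs_sub_comm]; exact le_abs_self _
end

section
/- The function g(v) = (max{f(u) : u ⪯ v} + min{f(u) : u ⪰ v}) / 2 is isotonic and is an L∞-optimal isotonic regression of f; that is, ||f−g||_∞ = min over isotonic h of ||f−h||_∞, and this minimum equals (1/2)·max{f(u)−f(w) : u ⪯ w}. -/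
open Finset

/-- The function `g v = (max{f u : u ⪯ v} + min{f u : u ⪰ v}) / 2` is isotonic
and is an `L∞`-optimal isotonic regression of `f`, with optimal error
`(1/2)·max{f u − f w : u ⪯ w}` (nonnegative since `u ⪯ u`). -/
theorem Linf_midpoint_optimal {V : Type*} [Fintype V] [Nonempty V] [PartialOrder V]
    [DecidableRel ((· ≤ ·) : V → V → Prop)] (f : V → ℝ)
    (g : V → ℝ)
    (hgdef : ∀ v : V,
      g v = (((Finset.univ.filter fun u => u ≤ v).sup' ⟨v, by simp⟩ f) +
             ((Finset.univ.filter fun u => v ≤ u).inf' ⟨v, by simp⟩ f)) / 2) :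
    Monotone g ∧
    (∀ h : V → ℝ, Monotone h →
      (Finset.univ.sup' Finset.univ_nonempty fun v => |f v - g v|) ≤
        Finset.univ.sup' Finset.univ_nonempty fun v => |f v - h v|) ∧
    (Finset.univ.sup' Finset.univ_nonempty fun v => |f v - g v|) =
      ((Finset.univ ×ˢ Finset.univ).filter fun p : V × V => p.1 ≤ p.2).sup'
        ⟨(Classical.arbitrary V, Classical.arbitrary V), by simp⟩
        (fun p => f p.1 - f p.2) / 2 := by
  classical
  set S : Finset (V × V) := (Finset.univ ×ˢ Finset.univ).filter fun p : V × V => p.1 ≤ p.2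
    with hS
  have hSne : S.Nonempty :=
    ⟨(Classical.arbitrary V, Classical.arbitrary V), by simp [hS]⟩
  set D : ℝ := S.sup' hSne (fun p => f p.1 - f p.2) with hD
  have hfD : ∀ u w : V, u ≤ w → f u - f w ≤ D := by
    intro u w huw
    exact Finset.le_sup' (f := fun p : V × V => f p.1 - f p.2) (by simp [hS, huw] :
      (u, w) ∈ S)
  set M : V → ℝ := fun v => (Finset.univ.filter fun u => u ≤ v).sup' ⟨v, by simp⟩ f with hM
  set m : V → ℝ := fun v => (Finset.univ.filter fun u => v ≤ u).inf' ⟨v, by simp⟩ f with hm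
  have hfM : ∀ v, f v ≤ M v := fun v => Finset.le_sup' f (by simp)
  have hmf : ∀ v, m v ≤ f v := fun v => Finset.inf'_le f (by simp)
  have hMD : ∀ v, M v ≤ f v + D := by
    intro v
    apply Finset.sup'_le
    intro u hu
    simp only [Finset.mem_filter] at hu
    have := hfD u v hu.2
    linarith
  have hmD : ∀ v, f v - D ≤ m v := by
    intro v
    apply Finset.le_inf'
    intro u hu
    simp only [Finset.mem_filter] at hu
    have := hfD v u hu.2
    linarith
  have hMmono : ∀ v w : V, v ≤ w → M v ≤ M w := by
    intro v w hvw
    apply Finset.sup'_le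
    intro u hu
    simp only [Finset.mem_filter] at hu
    exact Finset.le_sup' f (by simp [le_trans hu.2 hvw])
  have hmmono : ∀ v w : V, v ≤ w → m v ≤ m w := by
    intro v w hvw
    apply Finset.le_inf'
    intro u hu
    simp only [Finset.mem_filter] at hu
    exact Finset.inf'_le f (by simp [le_trans hvw hu.2])
  have hgmono : Monotone g := by
    intro v w hvw
    rw [hgdef v, hgdef w]
    have h1 := hMmono v w hvw
    have h2 := hmmono v w hvw
    linarith
  have hbound : ∀ v, |f v - g v| ≤ D / 2 := by
    intro v
    rw [hgdef v, abs_le]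
    have h1 := hfM v
    have h2 := hmf v
    have h3 := hMD v
    have h4 := hmD v
    constructor <;> linarith
  have hsupg : (Finset.univ.sup' Finset.univ_nonempty fun v => |f v - g v|) ≤ D / 2 :=
    Finset.sup'_le _ _ fun v _ => hbound v
  have hlower : ∀ h : V → ℝ, Monotone h →
      D / 2 ≤ Finset.univ.sup' Finset.univ_nonempty fun v => |f v - h v| := by
    intro h hmono
    obtain ⟨p, hp, hpD⟩ := Finset.exists_mem_eq_sup' hSne (fun p : V × V => f p.1 - f p.2)
    simp only [hS, Finset.mem_filter] at hp
    have hle : p.1 ≤ p.2 := hp.2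
    have h1 : |f p.1 - h p.1| ≤ Finset.univ.sup' Finset.univ_nonempty fun v => |f v - h v| :=
      Finset.le_sup' (fun v => |f v - h v|) (Finset.mem_univ p.1)
    have h2 : |f p.2 - h p.2| ≤ Finset.univ.sup' Finset.univ_nonempty fun v => |f v - h v| :=
      Finset.le_sup' (fun v => |f v - h v|) (Finset.mem_univ p.2)
    have hhh : h p.1 ≤ h p.2 := hmono hle
    have h3 : f p.1 - h p.1 ≤ |f p.1 - h p.1| := le_abs_self _
    have h4 : -|f p.2 - h p.2| ≤ f p.2 - h p.2 := neg_abs_le _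
    have hDeq : D = f p.1 - f p.2 := hpD
    linarith
  have heq : (Finset.univ.sup' Finset.univ_nonempty fun v => |f v - g v|) = D / 2 :=
    le_antisymm hsupg (hlower g hgmono)
  refine ⟨hgmono, fun h hmono => heq ▸ hlower h hmono, heq⟩
end
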